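/- Let 𝔳 = {ν_i}_{i∈I} be a totally ordered set in V with no maximal element such that at least one polynomial is not 𝔳-stable. Let Q be a monic polynomial of smallest degree that is not 𝔳-stable, take γ ∈ Γ ∪ {∞} with γ > ν_i(Q) for every i ∈ I, and let μ be the valuation defined by μ(f_0 + f_1 Q + … + f_r Q^r) = min_{0≤j≤r} {𝔳(f_j) + jγ} on Q-expansions. Fix i ∈ I and f ∈ K[x]. If ν_i(f) < μ(f), then ν_i(f) < ν_j(f) for every j > i. -/

import Mathlib

open Polynomial

/-- An additive valuation (possibly with nontrivial support) on a commutative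
ring `R`, with values in `Γ ∪ {∞}`. -/
structure ValOn (R : Type*) [CommRing R] (Γ : Type*) [AddCommGroup Γ] [LinearOrder Γ] [IsOrderedAddMonoid Γ] where
  v : R → WithTop Γ
  v_zero : v 0 = ⊤
  v_one : v 1 = 0
  v_mul : ∀ a b, v (a * b) = v a + v b
  min_le_v_add : ∀ a b, min (v a) (v b) ≤ v (a + b)

namespace ValOn

variable {R : Type*} [CommRing R] {Γ : Type*} [AddCommGroup Γ] [LinearOrder Γ] [IsOrderedAddMonoid Γ]

theorem v_neg (w : ValOn R Γ) (a : R) : w.v (-a) = w.v a := by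
  have h1 : w.v (-1) + w.v (-1) = 0 := by
    rw [← w.v_mul]; norm_num [w.v_one]
  have h2 : w.v (-1) = 0 := by
    cases hx : w.v (-1) with
    | top => rw [hx] at h1; simp at h1
    | coe x =>
        rw [hx, ← WithTop.coe_add, ← WithTop.coe_zero, WithTop.coe_inj] at h1
        have hx0 : x = 0 := by
          rcases lt_trichotomy x 0 with hc | hc | hc
          · exact absurd h1 (ne_of_lt (add_neg hc hc))
          · exact hc
          · exact absurd h1 (ne_of_gt (add_pos hc hc))
        rw [hx0, WithTop.coe_zero]
  calc w.v (-a) = w.v (-1 * a) := by rw [neg_one_mul]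
  _ = w.v a := by rw [w.v_mul, h2, zero_add]

theorem le_v_sum (w : ValOn R Γ) {α : Type*} {γ : WithTop Γ} (s : Finset α) (h : α → R)
    (H : ∀ t ∈ s, γ ≤ w.v (h t)) : γ ≤ w.v (∑ t ∈ s, h t) := by
  classical
  induction s using Finset.induction_on with
  | empty => simp [w.v_zero]
  | insert x s hx ih =>
      rw [Finset.sum_insert hx]
      refine le_trans ?_ (w.min_le_v_add _ _)
      rw [le_min_iff]
      exact ⟨H _ (Finset.mem_insert_self _ _),
        ih fun t ht => H t (Finset.mem_insert_of_mem ht)⟩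

theorem lt_v_sum (w : ValOn R Γ) {α : Type*} {γ : WithTop Γ} (hγ : γ ≠ ⊤) (s : Finset α)
    (h : α → R) (H : ∀ t ∈ s, γ < w.v (h t)) : γ < w.v (∑ t ∈ s, h t) := by
  classical
  induction s using Finset.induction_on with
  | empty => simp [w.v_zero]; exact lt_top_iff_ne_top.mpr hγ
  | insert x s hx ih =>
      rw [Finset.sum_insert hx]
      refine lt_of_lt_of_le ?_ (w.min_le_v_add _ _)
      rw [lt_min_iff]
      exact ⟨H _ (Finset.mem_insert_self _ _),
        ih fun t ht => H t (Finset.mem_insert_of_mem ht)⟩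

/-- The subring `⊕_{γ ∈ Γ} P_γ` of the monoid algebra `R[Γ]`, where
`P_γ = {f : γ ≤ v f}`.  The graded ring `G_v = ⊕_γ P_γ/P_γ⁺` is realized below as the
quotient of this subring by the ideal `⊕_γ P_γ⁺`. -/
def gradedCarrier (w : ValOn R Γ) : Subring (AddMonoidAlgebra R Γ) where
  carrier := {s | ∀ γ : Γ, (γ : WithTop Γ) ≤ w.v (s.coeff γ)}
  zero_mem' := by intro γ; simp [w.v_zero]
  one_mem' := by
    intro γ
    classical
    show (γ : WithTop Γ) ≤ w.v ((AddMonoidAlgebra.single (0:Γ) (1:R)).coeff γ)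
    rw [AddMonoidAlgebra.coeff_single, Finsupp.single_apply]
    split_ifs with h
    · subst h; simp [w.v_one]
    · simp [w.v_zero]
  add_mem' := by
    intro a b ha hb γ
    refine le_trans ?_ (w.min_le_v_add _ _)
    exact le_min (ha γ) (hb γ)
  neg_mem' := by
    intro a ha γ
    show (γ : WithTop Γ) ≤ w.v ((-a).coeff γ)
    rw [AddMonoidAlgebra.coeff_neg, Finsupp.neg_apply, w.v_neg]
    exact ha γ
  mul_mem' := by
    classical
    intro a b ha hb γ
    rw [AddMonoidAlgebra.coeff_mul]
    rw [Finsupp.sum]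
    refine w.le_v_sum _ _ (fun α hα => ?_)
    rw [Finsupp.sum]
    refine w.le_v_sum _ _ (fun β hβ => ?_)
    split_ifs with h
    · subst h
      rw [w.v_mul, WithTop.coe_add]
      exact add_le_add (ha α) (hb β)
    · simp [w.v_zero]

/-- The ideal `⊕_{γ ∈ Γ} P_γ⁺` of `gradedCarrier w`. -/
def gradedIdeal (w : ValOn R Γ) : Ideal (gradedCarrier w) where
  carrier := {s | ∀ γ : Γ, (γ : WithTop Γ) < w.v ((s : AddMonoidAlgebra R Γ).coeff γ)}
  zero_mem' := by intro γ; simp [w.v_zero]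
  add_mem' := by
    intro a b ha hb γ
    refine lt_of_lt_of_le ?_ (w.min_le_v_add _ _)
    exact lt_min (ha γ) (hb γ)
  smul_mem' := by
    classical
    intro c x hx γ
    rw [smul_eq_mul]
    show (γ : WithTop Γ) < w.v (((c : AddMonoidAlgebra R Γ) * (x : AddMonoidAlgebra R Γ)).coeff γ)
    rw [AddMonoidAlgebra.coeff_mul, Finsupp.sum]
    refine w.lt_v_sum (WithTop.coe_ne_top) _ _ (fun α hα => ?_)
    rw [Finsupp.sum]
    refine w.lt_v_sum (WithTop.coe_ne_top) _ _ (fun β hβ => ?_)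
    split_ifs with h
    · subst h
      rw [w.v_mul, WithTop.coe_add]
      exact WithTop.add_lt_add_of_le_of_lt WithTop.coe_ne_top (c.2 α) (hx β)
    · simp [w.v_zero]
end ValOn

/-- The graded ring `G_w = ⊕_{γ} P_γ/P_γ⁺` associated to the valuation `w`,
realized as a quotient. -/
abbrev Graded {R : Type*} [CommRing R] {Γ : Type*} [AddCommGroup Γ] [LinearOrder Γ] [IsOrderedAddMonoid Γ]
    (w : ValOn R Γ) : Type _ :=
  (ValOn.gradedCarrier w) ⧸ (ValOn.gradedIdeal w)

namespace ValOn

variable {R : Type*} [CommRing R] {Γ : Type*} [AddCommGroup Γ] [LinearOrder Γ] [IsOrderedAddMonoid Γ]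

/-- `inv_w f`, the initial form (image of `f` in the homogeneous component
`P_{v f}/P_{v f}⁺` of the graded ring), with `inv_w f = 0` when `f ∈ supp w`. -/
noncomputable def initialForm (w : ValOn R Γ) (f : R) : Graded w :=
  if h : w.v f = ⊤ then 0
  else Ideal.Quotient.mk (gradedIdeal w)
    ⟨AddMonoidAlgebra.single ((w.v f).untop h) f, by
      intro γ
      classical
      show (γ : WithTop Γ) ≤ w.v ((AddMonoidAlgebra.single ((w.v f).untop h) f).coeff γ)
      rw [AddMonoidAlgebra.coeff_single, Finsupp.single_apply]
      split_ifs with hh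
      · rw [← hh, WithTop.coe_untop]
      · simp [w.v_zero]⟩

theorem gradedCarrier_mono {w₁ w₂ : ValOn R Γ} (h : ∀ f, w₁.v f ≤ w₂.v f) :
    gradedCarrier w₁ ≤ gradedCarrier w₂ :=
  fun s hs γ => (hs γ).trans (h _)

/-- The homomorphism `φ : G_{w₁} → G_{w₂}` of graded rings, for `w₁ ≤ w₂`:
it sends `inv_{w₁} f` to `inv_{w₂} f` if `w₁ f = w₂ f` and to `0` if `w₁ f < w₂ f`. -/
noncomputable def phi (w₁ w₂ : ValOn R Γ) (h : ∀ f, w₁.v f ≤ w₂.v f) :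
    Graded w₁ →+* Graded w₂ :=
  Ideal.Quotient.lift (gradedIdeal w₁)
    ((Ideal.Quotient.mk (gradedIdeal w₂)).comp (Subring.inclusion (gradedCarrier_mono h)))
    (by
      intro a ha
      rw [RingHom.comp_apply, Ideal.Quotient.eq_zero_iff_mem]
      exact fun γ => lt_of_lt_of_le (ha γ) (h _))

end ValOn


open ValOn

section PolyDefs

variable {K : Type*} [Field K] {Γ : Type*} [AddCommGroup Γ] [LinearOrder Γ] [IsOrderedAddMonoid Γ]

/-- A polynomial `f` is `𝔳`-stable for a family `𝔳 = (ν_i)_{i ∈ I}` if the values `ν_i(f)`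
eventually stabilize. -/
def Stable {I : Type*} [Preorder I] (ν : I → ValOn (Polynomial K) Γ) (f : Polynomial K) : Prop :=
  ∃ i : I, ∀ j : I, i ≤ j → (ν j).v f = (ν i).v f

/-- The truncation `w_q` of `w` at `q`:
`w_q(f) = min_j w(f_j q^j)` where `f = ∑ f_j q^j` is the `q`-expansion of `f`
(for monic non-constant `q`, the `j`-th coefficient of the `q`-expansion is
`(f /ₘ q^j) %ₘ q`, and all the nonzero coefficients occur for `j ≤ natDegree f`). -/
noncomputable def truncVal (w : ValOn (Polynomial K) Γ) (q f : Polynomial K) : WithTop Γ :=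
  (Finset.range (f.natDegree + 1)).inf' Finset.nonempty_range_add_one
    (fun j => w.v (((f /ₘ q ^ j) %ₘ q) * q ^ j))

/-- `δ(f) = max {ν̄(x - a) : a a root of f}` for a polynomial over an algebraically closed
field, with the convention `δ(f) = ⊥ = -∞` when `f` has no roots (e.g. `deg f = 0`). -/
noncomputable def deltaOf {F : Type*} [Field F] (wbar : ValOn (Polynomial F) Γ)
    (f : Polynomial F) : WithBot (WithTop Γ) :=
  (f.roots.map (fun a => ((wbar.v (X - C a) : WithTop Γ) : WithBot (WithTop Γ)))).sup

/-- `δ(f)` of `f ∈ K[x]`, computed via the fixed extension `ν̄` of `ν` to `K̄[x]`. -/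
noncomputable def delta (wbar : ValOn (Polynomial (AlgebraicClosure K)) Γ)
    (f : Polynomial K) : WithBot (WithTop Γ) :=
  deltaOf wbar (f.map (algebraMap K (AlgebraicClosure K)))

/-- `Q` is a key polynomial (of level `δ(Q)`) for the valuation `ν` (with fixed extension
`ν̄` to `K̄[x]`): `Q` is monic and `δ(f) ≥ δ(Q) → deg f ≥ deg Q` for every nonzero `f`. -/
def IsKeyPoly (wbar : ValOn (Polynomial (AlgebraicClosure K)) Γ) (Q : Polynomial K) : Prop :=
  Q.Monic ∧ ∀ f : Polynomial K, f ≠ 0 → delta wbar Q ≤ delta wbar f → Q.degree ≤ f.degree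

/-- `Ψ_n`: the set of key polynomials of degree `n`. -/
def Psi (wbar : ValOn (Polynomial (AlgebraicClosure K)) Γ) (n : ℕ) : Set (Polynomial K) :=
  {Q | IsKeyPoly wbar Q ∧ Q.natDegree = n}

/-- The set `K_n = {f : ν_Q(f) < ν(f) for all Q ∈ Ψ_n}`. -/
def LimitSet (w : ValOn (Polynomial K) Γ) (wbar : ValOn (Polynomial (AlgebraicClosure K)) Γ)
    (n : ℕ) : Set (Polynomial K) :=
  {f | ∀ Q ∈ Psi wbar n, truncVal w Q f < w.v f}

/-- A limit key polynomial for `Ψ_n`: a monic polynomial in `K_n` of least degree. -/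
def IsLimitKeyPoly (w : ValOn (Polynomial K) Γ)
    (wbar : ValOn (Polynomial (AlgebraicClosure K)) Γ) (n : ℕ) (Qn : Polynomial K) : Prop :=
  Qn.Monic ∧ Qn ∈ LimitSet w wbar n ∧ ∀ g ∈ LimitSet w wbar n, Qn.degree ≤ g.degree

/-- `g` is `𝔳`-stable for the family `𝔳 = (ν_Q)_{Q ∈ Ψ_n}`, ordered by `Q ⪯ Q' ↔ ν_Q ≤ ν_{Q'}`. -/
def PsiStable (w : ValOn (Polynomial K) Γ) (wbar : ValOn (Polynomial (AlgebraicClosure K)) Γ)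
    (n : ℕ) (g : Polynomial K) : Prop :=
  ∃ Q ∈ Psi wbar n, ∀ Q' ∈ Psi wbar n,
    (∀ h : Polynomial K, truncVal w Q h ≤ truncVal w Q' h) → truncVal w Q' g = truncVal w Q g

/-- `v` is a Krull valuation: its support is trivial. -/
def IsKrullVal (v : Polynomial K → WithTop Γ) : Prop :=
  ∀ f : Polynomial K, f ≠ 0 → v f ≠ ⊤

/-- The quotient group `v(K[x])/ν₀K` is a torsion group: every value of `v` has a positive
multiple lying in the value group of `ν₀`. -/
def TorsionOverBase (ν₀ : ValOn K Γ) (v : Polynomial K → WithTop Γ) : Prop :=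
  ∀ f : Polynomial K, f ≠ 0 → ∃ m : ℕ, 0 < m ∧ ∃ a : K, a ≠ 0 ∧ m • v f = ν₀.v a

/-- `v` (a valuation on `K[x]` extending `ν₀`) is residue-transcendental: it is Krull and the
residue field extension `K(x)v ∣ Kν₀` is transcendental, i.e. there are `f, g` with
`v f = v g` whose residue `res(f/g)` is transcendental over `Kν₀`: every polynomial over
`Kν₀` (with coefficients `res(c_i)`, not all zero) does not vanish at `res(f/g)`. -/
def ResidueTranscendental (ν₀ : ValOn K Γ) (v : Polynomial K → WithTop Γ) : Prop :=
  IsKrullVal v ∧ ∃ f g : Polynomial K, f ≠ 0 ∧ g ≠ 0 ∧ v f = v g ∧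
    ∀ (n : ℕ) (c : ℕ → K), (∀ i, 0 ≤ ν₀.v (c i)) → (∃ i, i ≤ n ∧ ν₀.v (c i) = 0) →
      v (∑ i ∈ Finset.range (n + 1), Polynomial.C (c i) * f ^ i * g ^ (n - i)) = v (g ^ n)

/-- `v` is value-transcendental: it is not Krull, or `v(K[x])/ν₀K` is not torsion. -/
def ValueTranscendental (ν₀ : ValOn K Γ) (v : Polynomial K → WithTop Γ) : Prop :=
  ¬ IsKrullVal v ∨ ¬ TorsionOverBase ν₀ v

/-- `v` is valuation-transcendental. -/
def ValuationTranscendental (ν₀ : ValOn K Γ) (v : Polynomial K → WithTop Γ) : Prop :=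
  ValueTranscendental ν₀ v ∨ ResidueTranscendental ν₀ v

/-- `v` is valuation-algebraic. -/
def ValuationAlgebraic (ν₀ : ValOn K Γ) (v : Polynomial K → WithTop Γ) : Prop :=
  ¬ ValuationTranscendental ν₀ v

end PolyDefs

/-!
Suppose `ν_i f = ν_j f` with `i < j`. If some `ν_k` with `k ≥ j` increases `f`, let `φ` be of
least degree with `ν_i φ < ν_k φ`. Then `ν_i` is computed termwise on `φ`-expansions, and
`ν_i f = ν_j f` forces the minimum either onto the constant term (which gives `ν_k f = ν_i f`)
or `ν_j φ = ν_i φ` (which gives `ν_j = ν_i`); both are absurd. Otherwise `f` is `𝔳`-stable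
with value `ν_i f`. Its `Q`-coefficients are stable by minimality of `Q`, and comparing `ν_k`
with some `ν_l`, `l ≥ k` large, that moves `Q` puts the minimum onto the constant term `f_0`,
so `μ f ≤ 𝔳(f_0) = ν_i f`.
-/

open Finset Filter

namespace ValOn

variable {R : Type*} [CommRing R] {Γ : Type*} [AddCommGroup Γ] [LinearOrder Γ]
  [IsOrderedAddMonoid Γ]

def toAddValuation (w : ValOn R Γ) : AddValuation R (WithTop Γ) :=
  AddValuation.of w.v w.v_zero w.v_one w.min_le_v_add w.v_mul

end ValOn

theorem WithTop.nsmul_le_nsmul_iff_right {Γ : Type*} [AddCommMonoid Γ] [LinearOrder Γ]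
    [IsOrderedCancelAddMonoid Γ] {x y : WithTop Γ} {n : ℕ} (hn : n ≠ 0) :
    n • x ≤ n • y ↔ x ≤ y := by
  refine ⟨fun h => ?_, fun h => nsmul_le_nsmul_right h n⟩
  by_contra! hyx
  lift y to Γ using hyx.ne_top
  induction x with
  | top =>
    obtain ⟨m, rfl⟩ := Nat.exists_eq_succ_of_ne_zero hn
    rw [succ_nsmul, WithTop.add_top, ← WithTop.coe_nsmul] at h
    exact WithTop.coe_ne_top (top_le_iff.1 h)
  | coe x =>
    rw [← WithTop.coe_nsmul, ← WithTop.coe_nsmul, WithTop.coe_le_coe,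
      _root_.nsmul_le_nsmul_iff_right hn] at h
    exact h.not_gt (WithTop.coe_lt_coe.1 hyx)

theorem Finset.sum_range_succ_mul_pow {S : Type*} [CommSemiring S] (c : ℕ → S) (φ : S) (r : ℕ) :
    ∑ t ∈ range (r + 1), c t * φ ^ t = c 0 + φ * ∑ t ∈ range r, c (t + 1) * φ ^ t := by
  rw [sum_range_succ', mul_sum, add_comm, pow_zero, mul_one]
  exact congrArg _ (sum_congr rfl fun t _ => by ring)

theorem Polynomial.exists_sum_mul_pow {K : Type*} [Field K] {φ : K[X]} (hφ : 0 < φ.degree)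
    (f : K[X]) : ∃ (r : ℕ) (c : ℕ → K[X]),
      f = ∑ t ∈ range (r + 1), c t * φ ^ t ∧ ∀ t, (c t).degree < φ.degree := by
  by_cases hf : f = 0
  · refine ⟨0, 0, by simp [hf], fun _ => ?_⟩
    rw [Pi.zero_apply, degree_zero]
    exact bot_le.trans_lt hφ
  obtain ⟨r, c, hq, hc⟩ := exists_sum_mul_pow hφ (f / φ)
  refine ⟨r + 1, fun | 0 => f % φ | t + 1 => c t, ?_, ?_⟩
  · rw [sum_range_succ_mul_pow, ← hq]
    exact (EuclideanDomain.mod_add_div f φ).symm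
  · rintro (_ | t)
    exacts [degree_mod_lt f (ne_zero_of_degree_gt hφ), hc t]
termination_by f.degree
decreasing_by exact degree_div_lt hf hφ

namespace AddValuation

section LowerBound

variable {R : Type*} [CommRing R] {Γ₀ : Type*} [LinearOrderedAddCommMonoidWithTop Γ₀]

theorem inf'_le_map_sum_mul_pow (v : AddValuation R Γ₀) (φ : R) (r : ℕ) (c : ℕ → R) :
    (range (r + 1)).inf' nonempty_range_add_one (fun t => v (c t) + t • v φ) ≤
      v (∑ t ∈ range (r + 1), c t * φ ^ t) :=
  v.map_le_sum fun t ht => by rw [map_mul, map_pow]; exact inf'_le _ ht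

end LowerBound

variable {R : Type*} [CommRing R] {Γ : Type*} [AddCommGroup Γ] [LinearOrder Γ]
  [IsOrderedAddMonoid Γ] {v v' v'' : AddValuation R (WithTop Γ)}

theorem map_add_eq_min_of_le (hle : ∀ x, v x ≤ v'' x) {a c : R} (ha : v a = v'' a)
    (hc : v c < v'' c) : v (a + c) = min (v a) (v c) := by
  rcases lt_trichotomy (v a) (v c) with h | h | h
  · rw [v.map_add_eq_of_lt_left h, min_eq_left h.le]
  · refine le_antisymm ?_ (v.map_add a c)
    calc v (a + c) ≤ v'' (a + c) := hle _
      _ = v'' a := v''.map_add_eq_of_lt_left (by rwa [← ha, h])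
      _ = min (v a) (v c) := by rw [← ha, h, min_self]
  · rw [v.map_add_eq_of_lt_right h, min_eq_right h.le]

theorem map_mul_lt_of_lt (hle : ∀ x, v x ≤ v'' x) {φ b : R} (hφ : v φ < v'' φ)
    (hb : v b ≠ ⊤) : v (φ * b) < v'' (φ * b) := by
  rw [map_mul, map_mul]
  exact (WithTop.add_lt_add_right hb hφ).trans_le (by gcongr; exact hle b)

theorem map_add_mul_eq_min (hle : ∀ x, v x ≤ v'' x) {a φ : R} (ha : v a = v'' a)
    (hφ : v φ < v'' φ) (b : R) : v (a + φ * b) = min (v a) (v φ + v b) := by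
  by_cases hb : v b = ⊤
  · rw [v.map_add_supp a (by simp [mem_supp_iff, hb]), hb, add_top, min_top_right]
  · rw [map_add_eq_min_of_le hle ha (map_mul_lt_of_lt hle hφ hb), map_mul]

theorem map_add_mul_eq_of_map_add_mul_eq (hle : ∀ x, v x ≤ v'' x) {a φ b : R}
    (ha : v a = v'' a) (hφ : v φ < v'' φ) (h : v (a + φ * b) = v a) :
    v'' (a + φ * b) = v a := by
  by_cases hb : v b = ⊤
  · have hb'' : v'' b = ⊤ := top_le_iff.1 (hb ▸ hle b)
    rw [v''.map_add_supp a (by simp [mem_supp_iff, hb'']), ha]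
  · have hφb := map_mul_lt_of_lt hle hφ hb
    rw [map_add_eq_min_of_le hle ha hφb, min_eq_left_iff] at h
    rw [v''.map_add_eq_of_lt_left (ha ▸ h.trans_lt hφb), ha]

theorem map_sum_mul_pow_le (hle : ∀ x, v x ≤ v'' x) {φ : R} (hφ : v φ < v'' φ) {r : ℕ}
    {c : ℕ → R} (hc : ∀ t ≤ r, v (c t) = v'' (c t)) {t : ℕ} (ht : t ≤ r) :
    v (∑ s ∈ range (r + 1), c s * φ ^ s) ≤ v (c t) + t • v φ := by
  induction r generalizing c t with
  | zero => obtain rfl := Nat.le_zero.1 ht; simp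
  | succ r ih =>
    rw [sum_range_succ_mul_pow, map_add_mul_eq_min hle (hc 0 (Nat.zero_le _)) hφ]
    rcases t with _ | t
    · simp
    · calc _ ≤ v φ + v (∑ s ∈ range (r + 1), c (s + 1) * φ ^ s) := min_le_right _ _
        _ ≤ v φ + (v (c (t + 1)) + t • v φ) := by
          gcongr; exact ih (fun s hs => hc (s + 1) (by omega)) (by omega)
        _ = v (c (t + 1)) + (t + 1) • v φ := by rw [succ_nsmul']; abel

theorem map_sum_mul_pow_eq_inf' (hle : ∀ x, v x ≤ v'' x) {φ : R} (hφ : v φ < v'' φ) {r : ℕ}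
    {c : ℕ → R} (hc : ∀ t ≤ r, v (c t) = v'' (c t)) :
    v (∑ t ∈ range (r + 1), c t * φ ^ t) =
      (range (r + 1)).inf' nonempty_range_add_one (fun t => v (c t) + t • v φ) :=
  le_antisymm (le_inf' _ _ fun _ ht => map_sum_mul_pow_le hle hφ hc (mem_range_succ_iff.1 ht))
    (inf'_le_map_sum_mul_pow v φ r c)

theorem map_coeff_zero_eq_or_le (hle : ∀ x, v x ≤ v'' x) {φ : R} (hφ : v φ < v'' φ) {r : ℕ}
    {c : ℕ → R} (hc : ∀ t ≤ r, v (c t) = v'' (c t)) (hc' : ∀ t ≤ r, v' (c t) = v (c t))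
    (hf : v' (∑ t ∈ range (r + 1), c t * φ ^ t) = v (∑ t ∈ range (r + 1), c t * φ ^ t)) :
    v (∑ t ∈ range (r + 1), c t * φ ^ t) = v (c 0) ∨ v' φ ≤ v φ := by
  set f := ∑ t ∈ range (r + 1), c t * φ ^ t
  have hf0 : v f ≤ v (c 0) := by simpa using map_sum_mul_pow_le hle hφ hc (Nat.zero_le r)
  obtain ⟨s, hs, hmin⟩ := exists_mem_eq_inf' nonempty_range_add_one (fun t => v' (c t) + t • v' φ)
  have hsr := mem_range_succ_iff.1 hs
  have hlow : v (c s) + s • v' φ ≤ v f := by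
    rw [← hc' s hsr, ← hmin, ← hf]
    exact inf'_le_map_sum_mul_pow v' φ r c
  have hup : v f ≤ v (c s) + s • v φ := map_sum_mul_pow_le hle hφ hc hsr
  rcases eq_or_ne s 0 with rfl | hs0
  · exact .inl (hf0.antisymm (by simpa using hlow))
  by_cases hcs : v (c s) = ⊤
  · rw [hcs, top_add, top_le_iff] at hlow
    exact .inl (hf0.antisymm (hlow ▸ le_top))
  · exact .inr ((WithTop.nsmul_le_nsmul_iff_right hs0).1
      ((WithTop.add_le_add_iff_left hcs).1 (hlow.trans hup)))

theorem map_sum_mul_pow_eq_map_coeff_zero (hle : ∀ x, v x ≤ v' x) {φ : R} (hφ : v φ < v' φ)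
    {r : ℕ} {c : ℕ → R} (hc : ∀ t ≤ r, v (c t) = v' (c t))
    (hf : v (∑ t ∈ range (r + 1), c t * φ ^ t) = v' (∑ t ∈ range (r + 1), c t * φ ^ t)) :
    v (∑ t ∈ range (r + 1), c t * φ ^ t) = v (c 0) :=
  (map_coeff_zero_eq_or_le hle hφ hc (fun t ht => (hc t ht).symm) hf.symm).resolve_right
    hφ.not_ge

section Polynomial

open Polynomial

variable {K : Type*} [Field K] {v v' v'' : AddValuation K[X] (WithTop Γ)}

theorem exists_min_degree_map_lt (hC : ∀ a, v (C a) = v'' (C a)) (hle : ∀ x, v x ≤ v'' x)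
    {g : K[X]} (hg : v g < v'' g) :
    ∃ φ : K[X], 0 < φ.degree ∧ v φ < v'' φ ∧ ∀ x : K[X], x.degree < φ.degree → v x = v'' x := by
  classical
  have hex : ∃ n, ∃ φ : K[X], φ.natDegree = n ∧ v φ < v'' φ := ⟨_, g, rfl, hg⟩
  obtain ⟨φ, hφn, hφ⟩ := Nat.find_spec hex
  refine ⟨φ, ?_, hφ, fun x hx => (hle x).antisymm (not_lt.1 fun hlt => ?_)⟩
  · by_contra! hφ0
    rw [degree_le_zero_iff] at hφ0
    exact (hφ0 ▸ hφ).ne (hC _)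
  · have hx0 : x ≠ 0 := by rintro rfl; simp at hlt
    exact Nat.find_min hex (hφn ▸ natDegree_lt_natDegree hx0 hx) ⟨x, rfl, hlt⟩

theorem eq_of_map_eq_of_map_lt (hC : ∀ a, v (C a) = v'' (C a)) (h₁ : ∀ x, v x ≤ v' x)
    (h₂ : ∀ x, v' x ≤ v'' x) {f : K[X]} (hf : v f = v' f) (hf'' : v f < v'' f) : v = v' := by
  have hle x : v x ≤ v'' x := (h₁ x).trans (h₂ x)
  obtain ⟨φ, hφpos, hφ, hmin⟩ := exists_min_degree_map_lt hC hle hf''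
  have hmin' x (hx : x.degree < φ.degree) : v' x = v'' x :=
    (h₂ x).antisymm (hmin x hx ▸ h₁ x)
  obtain ⟨r, c, rfl, hc⟩ := exists_sum_mul_pow hφpos f
  rcases map_coeff_zero_eq_or_le hle hφ (fun t _ => hmin _ (hc t))
    (fun t _ => (hmin' _ (hc t)).trans (hmin _ (hc t)).symm) hf.symm with h0 | hφ'
  · rw [sum_range_succ_mul_pow] at h0 hf''
    have h0'' := map_add_mul_eq_of_map_add_mul_eq hle (hmin _ (hc 0)) hφ h0
    exact (hf''.ne' (h0''.trans h0.symm)).elim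
  · have hφeq : v' φ = v φ := hφ'.antisymm (h₁ φ)
    ext g
    obtain ⟨s, b, rfl, hb⟩ := exists_sum_mul_pow hφpos g
    rw [map_sum_mul_pow_eq_inf' hle hφ (fun t _ => hmin _ (hb t)),
      map_sum_mul_pow_eq_inf' h₂ (hφeq ▸ hφ) (fun t _ => hmin' _ (hb t))]
    exact inf'_congr _ rfl fun t _ => by rw [hφeq, hmin _ (hb t), hmin' _ (hb t)]

end Polynomial

end AddValuation

open Polynomial

theorem limit_le_of_eventually_eq {K : Type*} [Field K] {Γ : Type*} [AddCommGroup Γ]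
    [LinearOrder Γ] [IsOrderedAddMonoid Γ] {I : Type*} [LinearOrder I] [Nonempty I]
    {ν₀ : ValOn K Γ} {ν : I → ValOn K[X] Γ} (hext : ∀ (i : I) (a : K), (ν i).v (C a) = ν₀.v a)
    (hmono : ∀ i j : I, i ≤ j → ∀ f : K[X], (ν i).v f ≤ (ν j).v f)
    {Q : K[X]} (hQns : ¬ Stable ν Q) (hQmin : ∀ g : K[X], ¬ Stable ν g → Q.degree ≤ g.degree)
    {γ : WithTop Γ} {μ : ValOn K[X] Γ}
    (hμ : ∀ (f : K[X]) (r : ℕ) (c : ℕ → K[X]), f = ∑ j ∈ range (r + 1), c j * Q ^ j →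
      (∀ j : ℕ, (c j).degree < Q.degree) →
      ∃ i₀ : I, ∀ i : I, i₀ ≤ i →
        μ.v f = (range (r + 1)).inf' nonempty_range_add_one (fun j => (ν i).v (c j) + j • γ))
    {f : K[X]} {a : WithTop Γ} (hf : ∀ᶠ k in atTop, (ν k).v f = a) : μ.v f ≤ a := by
  have hQpos : 0 < Q.degree := by
    by_contra! hQ
    rw [degree_le_zero_iff] at hQ
    exact hQns ⟨Classical.arbitrary I, fun k _ => by rw [hQ, hext, hext]⟩
  obtain ⟨r, c, hfc, hc⟩ := exists_sum_mul_pow hQpos f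
  have hcst t : Stable ν (c t) := not_not.1 fun h => (hQmin _ h).not_gt (hc t)
  choose i₁ hi₁ using hcst
  have hcoeff : ∀ᶠ k in atTop, ∀ t ∈ Set.Iic r, (ν k).v (c t) = (ν (i₁ t)).v (c t) :=
    (eventually_all_finite (Set.finite_Iic r)).2 fun t _ => eventually_atTop.2 ⟨i₁ t, hi₁ t⟩
  obtain ⟨k, hk⟩ :=
    ((hf.and (eventually_atTop.2 (hμ f r c hfc hc))).and hcoeff).exists_forall_of_atTop
  have hQjump : ∀ k, ∃ l, k ≤ l ∧ (ν l).v Q ≠ (ν k).v Q := by simpa [Stable] using hQns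
  obtain ⟨l, hkl, hQl⟩ := hQjump k
  obtain ⟨⟨hfk, hμk⟩, hck⟩ := hk k le_rfl
  obtain ⟨⟨hfl, -⟩, hcl⟩ := hk l hkl
  have h0 : (ν k).v f = (ν k).v (c 0) := by
    rw [hfc]
    exact AddValuation.map_sum_mul_pow_eq_map_coeff_zero (v := (ν k).toAddValuation)
      (v' := (ν l).toAddValuation)
      (hmono k l hkl) ((hmono k l hkl Q).lt_of_ne hQl.symm)
      (fun t ht => (hck t ht).trans (hcl t ht).symm) (hfc ▸ hfk.trans hfl.symm)
  calc μ.v f ≤ (ν k).v (c 0) + (0 : ℕ) • γ := hμk ▸ inf'_le _ (mem_range.2 r.succ_pos)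
    _ = a := by rw [zero_nsmul, add_zero, ← h0, hfk]

theorem value_increases_of_lt_limit_general
    {K : Type*} [Field K] {Γ : Type*} [AddCommGroup Γ] [LinearOrder Γ] [IsOrderedAddMonoid Γ]
    {I : Type*} [LinearOrder I] [Nonempty I]
    (ν₀ : ValOn K Γ) (ν : I → ValOn (Polynomial K) Γ)
    (hext : ∀ (i : I) (a : K), (ν i).v (Polynomial.C a) = ν₀.v a)
    (hmono : ∀ i j : I, i ≤ j → ∀ f : Polynomial K, (ν i).v f ≤ (ν j).v f)
    (hstrict : ∀ i j : I, i < j → ∃ f : Polynomial K, (ν i).v f < (ν j).v f)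
    (Q : Polynomial K) (hQns : ¬ Stable ν Q)
    (hQmin : ∀ g : Polynomial K, ¬ Stable ν g → Q.degree ≤ g.degree)
    (γ : WithTop Γ)
    (μ : ValOn (Polynomial K) Γ)
    (hμ : ∀ (f : Polynomial K) (r : ℕ) (c : ℕ → Polynomial K),
      f = ∑ j ∈ Finset.range (r + 1), c j * Q ^ j →
      (∀ j : ℕ, (c j).degree < Q.degree) →
      ∃ i₀ : I, ∀ i : I, i₀ ≤ i →
        μ.v f = (Finset.range (r + 1)).inf' Finset.nonempty_range_add_one
          (fun j => (ν i).v (c j) + j • γ))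
    (i : I) (f : Polynomial K) :
    (ν i).v f < μ.v f → ∀ j : I, i < j → (ν i).v f < (ν j).v f := by
  intro hlt j hij
  by_contra! hji
  by_cases hjump : ∃ k, j ≤ k ∧ (ν i).v f < (ν k).v f
  · obtain ⟨k, hjk, hk⟩ := hjump
    obtain ⟨g, hg⟩ := hstrict i j hij
    have hij' : (ν i).toAddValuation = (ν j).toAddValuation :=
      AddValuation.eq_of_map_eq_of_map_lt (v'' := (ν k).toAddValuation)
        (fun a => (hext i a).trans (hext k a).symm) (hmono i j hij.le) (hmono j k hjk)
        ((hmono i j hij.le f).antisymm hji) hk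
    exact hg.ne (DFunLike.congr_fun hij' g)
  · push Not at hjump
    have hstab : ∀ᶠ k in atTop, (ν k).v f = (ν i).v f := eventually_atTop.2
      ⟨j, fun k hjk => (hjump k hjk).antisymm (hmono i k (hij.le.trans hjk) f)⟩
    exact hlt.not_ge (limit_le_of_eventually_eq hext hmono hQns hQmin hμ hstab)

/-- If `ν_i(f) < μ(f)`, then `ν_i(f) < ν_j(f)` for every `j > i`. -/
theorem value_increases_of_lt_limit
    {K : Type*} [Field K] {Γ : Type*} [AddCommGroup Γ] [LinearOrder Γ] [IsOrderedAddMonoid Γ]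
    {I : Type*} [LinearOrder I] [Nonempty I]
    (ν₀ : ValOn K Γ) (ν : I → ValOn (Polynomial K) Γ)
    (hext : ∀ (i : I) (a : K), (ν i).v (Polynomial.C a) = ν₀.v a)
    (hmono : ∀ i j : I, i ≤ j → ∀ f : Polynomial K, (ν i).v f ≤ (ν j).v f)
    (hstrict : ∀ i j : I, i < j → ∃ f : Polynomial K, (ν i).v f < (ν j).v f)
    (hnomax : ∀ i : I, ∃ j : I, i < j)
    (Q : Polynomial K) (hQmonic : Q.Monic) (hQns : ¬ Stable ν Q)
    (hQmin : ∀ g : Polynomial K, ¬ Stable ν g → Q.degree ≤ g.degree)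
    (γ : WithTop Γ) (hγ : ∀ i : I, (ν i).v Q < γ)
    (μ : ValOn (Polynomial K) Γ)
    (hμext : ∀ a : K, μ.v (Polynomial.C a) = ν₀.v a)
    (hμ : ∀ (f : Polynomial K) (r : ℕ) (c : ℕ → Polynomial K),
      f = ∑ j ∈ Finset.range (r + 1), c j * Q ^ j →
      (∀ j : ℕ, (c j).degree < Q.degree) →
      ∃ i₀ : I, ∀ i : I, i₀ ≤ i →
        μ.v f = (Finset.range (r + 1)).inf' Finset.nonempty_range_add_one
          (fun j => (ν i).v (c j) + j • γ))
    (i : I) (f : Polynomial K) :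
    (ν i).v f < μ.v f → ∀ j : I, i < j → (ν i).v f < (ν j).v f :=
  value_increases_of_lt_limit_general ν₀ ν hext hmono hstrict Q hQns hQmin γ μ hμ i f
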